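/- (Lemma `lemma.empty.1`) There exist M₀ ≥ 1 and C₁ > 0, depending only on m̄, C₀, γ₀ and α (and not on M, γ, τ, ℓ, n, n'), such that for every M ≥ M₀, every sign σ ∈ {+1,−1}, every ℓ ∈ ℤ^ν and all n, n' ∈ ℕ₀, the following holds: if there exists ω ∈ R_M with |ω·ℓ + μ_n(ω) + σ·μ'_{n'}(ω)| < γ·⟨ℓ⟩^{−τ}·⟨n + σn'⟩^α·M^{−α}, then |n + σn'| ≤ C₁·M·⟨ℓ⟩. -/

import Mathlib

/-!
Put `x = n + σ n'`. Writing `x` as the small divisor minus `ω·ℓ`, minus `μ_n − n`, minus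
`σ (μ'_{n'} − n')`, each piece is controlled: the small divisor by its threshold, which for
`α ≤ 1` and `M ≥ 2` is at most `1 + |x|/2`; `ω·ℓ` by `2M⟨ℓ⟩` (Cauchy–Schwarz on `R_M`); the two
eigenvalue errors by `m̄ + C₀/γ₀`. Absorbing `|x|/2` gives `|x| ≲ M⟨ℓ⟩`.
-/

noncomputable section

open MeasureTheory

/-- The closed annulus `R_M = {ω ∈ ℝ^ν : M ≤ |ω| ≤ 2M}`. -/
def RM (ν : ℕ) (M : ℝ) : Set (EuclideanSpace ℝ (Fin ν)) :=
  {ω | M ≤ ‖ω‖ ∧ ‖ω‖ ≤ 2 * M}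

/-- Euclidean norm of an integer vector `ℓ ∈ ℤ^ν`. -/
def znorm {ν : ℕ} (ℓ : Fin ν → ℤ) : ℝ := Real.sqrt (∑ i, ((ℓ i : ℝ)) ^ 2)

/-- The inner product `ω·ℓ`. -/
def dotZ {ν : ℕ} (ω : EuclideanSpace ℝ (Fin ν)) (ℓ : Fin ν → ℤ) : ℝ :=
  ∑ i, ω i * (ℓ i : ℝ)

/-- Japanese bracket of a real number, `⟨x⟩ = max {1, |x|}`. -/
def japR (x : ℝ) : ℝ := max 1 |x|

/-- Japanese bracket of an integer vector, `⟨ℓ⟩ = max {1, |ℓ|}`. -/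
def japZv {ν : ℕ} (ℓ : Fin ν → ℤ) : ℝ := max 1 (znorm ℓ)

/-- The Diophantine set `Ω₀ = {ω ∈ R_M : |ω·ℓ| ≥ γ₀ M ⟨ℓ⟩^{−τ₀} ∀ ℓ ≠ 0}`. -/
def dioph (ν : ℕ) (M γ₀ τ₀ : ℝ) : Set (EuclideanSpace ℝ (Fin ν)) :=
  {ω ∈ RM ν M | ∀ ℓ : Fin ν → ℤ, ℓ ≠ 0 → γ₀ * M * japZv ℓ ^ (-τ₀) ≤ |dotZ ω ℓ|}

lemma abs_dotZ_le_norm_mul_znorm {ν : ℕ} (ω : EuclideanSpace ℝ (Fin ν)) (ℓ : Fin ν → ℤ) :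
    |dotZ ω ℓ| ≤ ‖ω‖ * znorm ℓ := by
  set v : EuclideanSpace ℝ (Fin ν) := WithLp.toLp 2 (fun i => (ℓ i : ℝ))
  have hv : ‖v‖ = znorm ℓ := by
    simp [v, znorm, EuclideanSpace.norm_eq, Real.norm_eq_abs, sq_abs]
  have hd : dotZ ω ℓ = inner ℝ ω v := by
    simp [dotZ, v, PiLp.inner_apply, RCLike.inner_apply, mul_comm]
  rw [hd, ← hv]
  exact abs_real_inner_le_norm ω v

lemma abs_dotZ_le_of_mem_RM {ν : ℕ} {M : ℝ} {ω : EuclideanSpace ℝ (Fin ν)} (hω : ω ∈ RM ν M)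
    (ℓ : Fin ν → ℤ) : |dotZ ω ℓ| ≤ 2 * M * japZv ℓ :=
  calc |dotZ ω ℓ| ≤ ‖ω‖ * znorm ℓ := abs_dotZ_le_norm_mul_znorm ω ℓ
    _ ≤ 2 * M * japZv ℓ :=
      mul_le_mul hω.2 (le_max_right _ _) (Real.sqrt_nonneg _) ((norm_nonneg ω).trans hω.2)

lemma Real.rpow_le_max_one_self {a α : ℝ} (ha : 0 ≤ a) (hα : 0 ≤ α) (hα1 : α ≤ 1) :
    a ^ α ≤ max 1 a := by
  rcases le_total a 1 with h | h
  · exact (Real.rpow_le_one ha h hα).trans (le_max_left _ _)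
  · calc a ^ α ≤ a ^ (1 : ℝ) := Real.rpow_le_rpow_of_exponent_le h hα1
      _ ≤ max 1 a := (Real.rpow_one a).trans_le (le_max_right _ _)

lemma japR_rpow_mul_rpow_neg_le {x M α : ℝ} (hM : 2 ≤ M) (hα : 0 ≤ α) (hα1 : α ≤ 1) :
    japR x ^ α * M ^ (-α) ≤ 1 + |x| / 2 := by
  have hM0 : 0 < M := by linarith
  have hj : 0 ≤ japR x := zero_le_one.trans (le_max_left _ _)
  rw [Real.rpow_neg hM0.le, ← div_eq_mul_inv, ← Real.div_rpow hj hM0.le]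
  refine (Real.rpow_le_max_one_self (by positivity) hα hα1).trans
    (max_le (by linarith [abs_nonneg x]) ?_)
  rw [div_le_iff₀ hM0]
  exact max_le (by nlinarith [abs_nonneg x]) (by nlinarith [abs_nonneg x])

lemma smallDivisor_threshold_le {ν : ℕ} (ℓ : Fin ν → ℤ) {γ τ α M x : ℝ} (hγ : γ ≤ 1)
    (hτ : 0 ≤ τ) (hM : 2 ≤ M) (hα : 0 ≤ α) (hα1 : α ≤ 1) :
    γ * japZv ℓ ^ (-τ) * japR x ^ α * M ^ (-α) ≤ 1 + |x| / 2 := by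
  have hℓ : 1 ≤ japZv ℓ := le_max_left _ _
  have hγℓ : γ * japZv ℓ ^ (-τ) ≤ 1 :=
    mul_le_one₀ hγ (Real.rpow_nonneg (zero_le_one.trans hℓ) _)
      (Real.rpow_le_one_of_one_le_of_nonpos hℓ (neg_nonpos.mpr hτ))
  have hpos : 0 ≤ japR x ^ α * M ^ (-α) := by
    have : 0 ≤ japR x := zero_le_one.trans (le_max_left _ _)
    positivity
  rw [mul_assoc]
  exact (mul_le_of_le_one_left hpos hγℓ).trans (japR_rpow_mul_rpow_neg_le hM hα hα1)

lemma abs_sub_le_of_eigenvalue_bounds {μ l t d mbar C₀ γ₀ M α : ℝ} (hd : 1 ≤ d)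
    (hmbar : 0 ≤ mbar) (hC₀ : 0 ≤ C₀) (hγ₀ : 0 < γ₀) (hM : 1 ≤ M) (hα : 0 ≤ α)
    (hl : |l - t| ≤ mbar / d) (hμ : |μ - l| ≤ C₀ / (γ₀ * M) / d ^ α) :
    |μ - t| ≤ mbar + C₀ / γ₀ := by
  have hμ' : |μ - l| ≤ C₀ / γ₀ :=
    calc |μ - l| ≤ C₀ / (γ₀ * M) / d ^ α := hμ
      _ ≤ C₀ / (γ₀ * M) := div_le_self (by positivity) (Real.one_le_rpow hd hα)
      _ ≤ C₀ / γ₀ := div_le_div_of_nonneg_left hC₀ hγ₀ (le_mul_of_one_le_right hγ₀.le hM)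
  calc |μ - t| ≤ |μ - l| + |l - t| := abs_sub_le _ _ _
    _ ≤ C₀ / γ₀ + mbar := add_le_add hμ' (hl.trans (div_le_self hmbar hd))
    _ = mbar + C₀ / γ₀ := add_comm _ _

lemma abs_add_mul_le_of_abs_eq_one {σ a b D e e' : ℝ} (hσ : |σ| = 1) :
    |a + σ * b| ≤ |D + e + σ * e'| + |D| + |e - a| + |e' - b| :=
  calc |a + σ * b| = |D + e + σ * e' - D - (e - a) - σ * (e' - b)| := by ring_nf
    _ ≤ |D + e + σ * e'| + |D| + |e - a| + |σ * (e' - b)| :=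
      (abs_sub _ _).trans (add_le_add_left ((abs_sub _ _).trans
        (add_le_add_left (abs_sub _ _) _)) _)
    _ = |D + e + σ * e'| + |D| + |e - a| + |e' - b| := by rw [abs_mul, hσ, one_mul]

theorem lemma_empty_1_general
    (α γ₀ mbar C₀ : ℝ) (hα : 0 < α) (hα1 : α < 1)
    (hγ₀ : 0 < γ₀) (hmbar : 0 < mbar) (hC₀ : 0 < C₀) :
    ∃ M₀ C₁ : ℝ, 1 ≤ M₀ ∧ 0 < C₁ ∧
      ∀ ν : ℕ, 1 ≤ ν →
      ∀ M : ℝ, M₀ ≤ M →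
      ∀ γ τ₀ τ : ℝ, 0 < γ → γ < 1 → (ν : ℝ) - 1 < τ₀ → τ₀ ≤ τ →
      ∀ lam : ℕ → ℝ, (∀ n : ℕ, |lam n - (n : ℝ)| ≤ mbar / max 1 (n : ℝ)) →
      ∀ μ μ' : ℕ → EuclideanSpace ℝ (Fin ν) → ℝ,
        (∀ n : ℕ, ∀ ω ∈ RM ν M,
          |μ n ω - lam n| ≤ C₀ / (γ₀ * M) / (max 1 (n : ℝ)) ^ α) →
        (∀ n : ℕ, ∀ ω ∈ RM ν M,
          |μ' n ω - lam n| ≤ C₀ / (γ₀ * M) / (max 1 (n : ℝ)) ^ α) →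
      ∀ σ : ℝ, (σ = 1 ∨ σ = -1) →
      ∀ (ℓ : Fin ν → ℤ) (n n' : ℕ),
        (∃ ω ∈ RM ν M,
          |dotZ ω ℓ + μ n ω + σ * μ' n' ω| <
            γ * japZv ℓ ^ (-τ) * japR ((n : ℝ) + σ * (n' : ℝ)) ^ α * M ^ (-α)) →
        |(n : ℝ) + σ * (n' : ℝ)| ≤ C₁ * M * japZv ℓ := by
  refine ⟨2, 6 + 4 * (mbar + C₀ / γ₀), by norm_num, by positivity, ?_⟩
  intro ν hν M hM γ τ₀ τ _ hγ1 hτ₀ hτ lam hlam μ μ' hμ hμ' σ hσ ℓ n n' ⟨ω, hω, hres⟩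
  have hτ0 : 0 ≤ τ := by
    have : (1 : ℝ) ≤ ν := by exact_mod_cast hν
    linarith
  have hM1 : 1 ≤ M := by linarith
  have herr : ∀ f : ℕ → EuclideanSpace ℝ (Fin ν) → ℝ, (∀ k, ∀ ω ∈ RM ν M,
      |f k ω - lam k| ≤ C₀ / (γ₀ * M) / (max 1 (k : ℝ)) ^ α) →
      ∀ k, |f k ω - k| ≤ mbar + C₀ / γ₀ := fun f hf k =>
    abs_sub_le_of_eigenvalue_bounds (le_max_left _ _) hmbar.le hC₀.le hγ₀ hM1 hα.le
      (hlam k) (hf k ω hω)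
  have hσ1 : |σ| = 1 := by rcases hσ with rfl | rfl <;> simp
  have htri := abs_add_mul_le_of_abs_eq_one (a := (n : ℝ)) (b := n') (D := dotZ ω ℓ)
    (e := μ n ω) (e' := μ' n' ω) hσ1
  have hthr := smallDivisor_threshold_le ℓ (x := n + σ * n') hγ1.le hτ0 hM hα.le hα1.le
  have hdot := abs_dotZ_le_of_mem_RM hω ℓ
  have hMℓ : 1 ≤ M * japZv ℓ := one_le_mul_of_one_le_of_one_le hM1 (le_max_left _ _)
  have hK : mbar + C₀ / γ₀ ≤ (mbar + C₀ / γ₀) * (M * japZv ℓ) :=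
    le_mul_of_one_le_right (by positivity) hMℓ
  linarith [herr μ hμ n, herr μ' hμ' n']

/-- **Lemma `lemma.empty.1`.** If the nearly-resonant set is nonempty, then
`|n ± n'| ≤ C₁ M ⟨ℓ⟩`, with `M₀`, `C₁` depending only on `m̄`, `C₀`, `γ₀`, `α`. -/
theorem lemma_empty_1
    (α γ₀ mbar C₀ : ℝ) (hα : 0 < α) (hα1 : α < 1)
    (hγ₀ : 0 < γ₀) (hγ₀1 : γ₀ < 1) (hmbar : 0 < mbar) (hC₀ : 0 < C₀) :
    ∃ M₀ C₁ : ℝ, 1 ≤ M₀ ∧ 0 < C₁ ∧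
      ∀ ν : ℕ, 1 ≤ ν →
      ∀ M : ℝ, M₀ ≤ M →
      ∀ γ τ₀ τ : ℝ, 0 < γ → γ < 1 → (ν : ℝ) - 1 < τ₀ → τ₀ ≤ τ →
      ∀ lam : ℕ → ℝ, (∀ n : ℕ, |lam n - (n : ℝ)| ≤ mbar / max 1 (n : ℝ)) →
      ∀ μ μ' : ℕ → EuclideanSpace ℝ (Fin ν) → ℝ,
        (∀ n : ℕ, ∀ ω ∈ RM ν M,
          |μ n ω - lam n| ≤ C₀ / (γ₀ * M) / (max 1 (n : ℝ)) ^ α) →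
        (∀ n : ℕ, ∀ ω ∈ RM ν M,
          |μ' n ω - lam n| ≤ C₀ / (γ₀ * M) / (max 1 (n : ℝ)) ^ α) →
      ∀ σ : ℝ, (σ = 1 ∨ σ = -1) →
      ∀ (ℓ : Fin ν → ℤ) (n n' : ℕ),
        (∃ ω ∈ RM ν M,
          |dotZ ω ℓ + μ n ω + σ * μ' n' ω| <
            γ * japZv ℓ ^ (-τ) * japR ((n : ℝ) + σ * (n' : ℝ)) ^ α * M ^ (-α)) →
        |(n : ℝ) + σ * (n' : ℝ)| ≤ C₁ * M * japZv ℓ :=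
  lemma_empty_1_general α γ₀ mbar C₀ hα hα1 hγ₀ hmbar hC₀
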